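/- arXiv:2104.06084 — 3 statements merged into one kernel-verified Lean document; each statement's English description precedes it below -/
import Mathlib

section
/- The Reed-Muller code RM(r,m), defined as the span of evaluation vectors of all monomials x^v with Hamming weight wt(v) ≤ r, has dimension Σ_{i=0}^{r} binom(m, i). -/
/-- The monomial `x^v = ∏ i, x_i ^ v_i` as a Boolean function. -/
def mono {m : ℕ} (v : Fin m → ZMod 2) : (Fin m → ZMod 2) → ZMod 2 :=
  fun x => ∏ i, (x i) ^ (v i).val

/-- The Hamming weight of `v ∈ F₂^m`. -/
def wt {m : ℕ} (v : Fin m → ZMod 2) : ℕ :=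
  (Finset.univ.filter fun i => v i = 1).card

/-- The Reed–Muller code `RM(r,m)`: the span of the (evaluation vectors of)
monomials of degree at most `r`, viewed as functions on `F₂^m`. -/
def RM (r m : ℕ) : Submodule (ZMod 2) ((Fin m → ZMod 2) → ZMod 2) :=
  Submodule.span (ZMod 2) {f | ∃ v : Fin m → ZMod 2, wt v ≤ r ∧ f = mono v}

lemma zmod2_cases (a : ZMod 2) : a = 0 ∨ a = 1 := by revert a; decide

lemma mono_apply {m : ℕ} (u v : Fin m → ZMod 2) :
    mono u v = if ∀ i, u i = 1 → v i = 1 then 1 else 0 := by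
  unfold mono
  split
  · next h =>
    apply Finset.prod_eq_one
    intro i _
    rcases zmod2_cases (u i) with h0 | h1
    · simp [h0]
    · simp [h1, h i h1]
  · next h =>
    push_neg at h
    obtain ⟨i, hui, hvi⟩ := h
    apply Finset.prod_eq_zero (Finset.mem_univ i)
    rcases zmod2_cases (v i) with h0 | h1
    · simp [h0, hui]
    · exact absurd h1 hvi

lemma wt_lt_of_le {m : ℕ} {u v : Fin m → ZMod 2}
    (h : ∀ i, u i = 1 → v i = 1) (hne : u ≠ v) : wt u < wt v := by
  apply Finset.card_lt_card
  constructor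
  · intro i hi
    simp only [Finset.mem_filter, Finset.mem_univ, true_and] at hi ⊢
    exact h i hi
  · intro hsub
    apply hne
    funext i
    rcases zmod2_cases (u i) with h0 | h1
    · rcases zmod2_cases (v i) with g0 | g1
      · rw [h0, g0]
      · have : i ∈ Finset.univ.filter fun j => u j = 1 :=
          hsub (by simp [g1])
        simp only [Finset.mem_filter] at this
        rw [h0] at this; exact absurd this.2 (by decide)
    · rw [h1, h i h1]

lemma mono_li (m : ℕ) : LinearIndependent (ZMod 2) (mono (m := m)) := by
  rw [Fintype.linearIndependent_iff]
  intro g hg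
  suffices H : ∀ n v, wt v = n → g v = 0 by
    intro v; exact H (wt v) v rfl
  intro n
  induction n using Nat.strong_induction_on with
  | _ n ih =>
    intro v hv
    have h2 := congrFun hg v
    simp only [Finset.sum_apply, Pi.smul_apply, smul_eq_mul, Pi.zero_apply] at h2
    rw [Finset.sum_congr rfl (fun u _ => by rw [mono_apply])] at h2
    simp only [mul_ite, mul_one, mul_zero] at h2
    rw [Finset.sum_ite, Finset.sum_const_zero, add_zero] at h2
    rw [Finset.sum_eq_single_of_mem v (by simp)] at h2
    · exact h2
    · intro u hu hne
      simp only [Finset.mem_filter, Finset.mem_univ, true_and] at hu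
      exact ih (wt u) (hv ▸ wt_lt_of_le hu hne) u rfl

def suppEquiv (m : ℕ) : (Fin m → ZMod 2) ≃ Finset (Fin m) where
  toFun v := Finset.univ.filter fun i => v i = 1
  invFun A := fun i => if i ∈ A then 1 else 0
  left_inv v := by
    funext i
    rcases zmod2_cases (v i) with h0 | h1
    · simp [h0]
    · simp [h1]
  right_inv A := by
    ext i
    by_cases h : i ∈ A <;> simp [h]

lemma card_wt_le (r m : ℕ) :
    (Finset.univ.filter fun v : Fin m → ZMod 2 => wt v ≤ r).card
      = ∑ i ∈ Finset.range (r + 1), m.choose i := by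
  have h1 : (Finset.univ.filter fun v : Fin m → ZMod 2 => wt v ≤ r).card
      = (Finset.univ.filter fun A : Finset (Fin m) => A.card ≤ r).card := by
    apply Finset.card_bij (fun v _ => suppEquiv m v)
    · intro v hv
      simp only [Finset.mem_filter, Finset.mem_univ, true_and] at hv ⊢
      exact hv
    · intro a _ b _ hab
      exact (suppEquiv m).injective hab
    · intro A hA
      refine ⟨(suppEquiv m).symm A, ?_, (suppEquiv m).apply_symm_apply A⟩
      simp only [Finset.mem_filter, Finset.mem_univ, true_and] at hA ⊢
      show ((suppEquiv m) ((suppEquiv m).symm A)).card ≤ r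
      rw [(suppEquiv m).apply_symm_apply]; exact hA
  rw [h1]
  have h2 : (Finset.univ.filter fun A : Finset (Fin m) => A.card ≤ r)
      = (Finset.range (r + 1)).biUnion fun i => Finset.powersetCard i Finset.univ := by
    ext A
    simp [Finset.mem_powersetCard, Nat.lt_succ_iff]
  rw [h2, Finset.card_biUnion]
  · apply Finset.sum_congr rfl
    intro i _
    rw [Finset.card_powersetCard, Finset.card_fin]
  · intro i _ j _ hij
    simp only [Finset.disjoint_left, Finset.mem_powersetCard]
    rintro A ⟨-, hi⟩ ⟨-, hj⟩
    exact hij (hi ▸ hj ▸ rfl)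

theorem RM_finrank (r m : ℕ) (hr : r ≤ m) :
    Module.finrank (ZMod 2) (RM r m) = ∑ i ∈ Finset.range (r + 1), m.choose i := by
  classical
  have hset : {f : (Fin m → ZMod 2) → ZMod 2 | ∃ v, wt v ≤ r ∧ f = mono v}
      = Set.range (fun v : {v : Fin m → ZMod 2 // wt v ≤ r} => mono v.val) := by
    ext f
    constructor
    · rintro ⟨v, hv, rfl⟩; exact ⟨⟨v, hv⟩, rfl⟩
    · rintro ⟨⟨v, hv⟩, rfl⟩; exact ⟨v, hv, rfl⟩
  have hli : LinearIndependent (ZMod 2)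
      (fun v : {v : Fin m → ZMod 2 // wt v ≤ r} => mono v.val) :=
    (mono_li m).comp _ Subtype.val_injective
  rw [RM, hset, finrank_span_eq_card hli, Fintype.card_subtype]
  exact card_wt_le r m
end

section
/- Let C be a binary linear code of length 2^m with monomial generating set M_C (a set of monomials whose evaluations form a basis of C). Then the minimum Hamming distance of C equals 2^{m − r} where r = max{wt(v) : x^v ∈ M_C}. -/
/-- The Hamming weight of a codeword (viewed as a function on `F₂^m`). -/
def fwt {m : ℕ} (c : (Fin m → ZMod 2) → ZMod 2) : ℕ :=
  (Finset.univ.filter fun x => c x ≠ 0).card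

open Finset

section MonomialCode

variable {m : ℕ}

lemma pow_val_ne_zero_iff_zmod_two (a e : ZMod 2) : a ^ e.val ≠ 0 ↔ (e = 1 → a = 1) := by
  revert a e; decide

lemma sum_pow_val_zmod_two (e : ZMod 2) : ∑ b : ZMod 2, b ^ e.val = if e = 1 then 1 else 0 := by
  revert e; decide

lemma eq_of_support_subset_of_wt_le {u v : Fin m → ZMod 2}
    (huv : ∀ i, u i = 1 → v i = 1) (hwt : wt v ≤ wt u) : v = u := by
  have hsupp : univ.filter (fun i => u i = 1) = univ.filter fun i => v i = 1 :=
    eq_of_subset_of_card_le (fun i hi => by simp_all) hwt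
  funext i
  have hi : u i = 1 ↔ v i = 1 := by simpa using congrArg (i ∈ ·) hsupp
  revert hi; generalize u i = a; generalize v i = b; revert a b; decide

lemma card_piFinset_ite_singleton (u : Fin m → ZMod 2) (b : ZMod 2) :
    #(Fintype.piFinset fun i => if u i = 1 then {b} else univ) = 2 ^ (m - wt u) := by
  have hcard := card_filter_add_card_filter_not (s := (univ : Finset (Fin m))) (fun i => u i = 1)
  rw [card_univ, Fintype.card_fin] at hcard
  rw [Fintype.card_piFinset, prod_congr rfl fun i _ => apply_ite card (u i = 1) {b} univ,
    prod_ite, card_singleton, prod_const_one, one_mul, prod_const, card_univ, ZMod.card, wt]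
  congr 1
  omega

lemma mono_ne_zero_iff (v x : Fin m → ZMod 2) : mono v x ≠ 0 ↔ ∀ i, v i = 1 → x i = 1 := by
  simp only [mono, prod_ne_zero_iff, mem_univ, true_implies, pow_val_ne_zero_iff_zmod_two]

lemma fwt_mono (v : Fin m → ZMod 2) : fwt (mono v) = 2 ^ (m - wt v) := by
  rw [← card_piFinset_ite_singleton v 1, fwt]
  congr 1
  ext x
  simp only [mem_filter, mem_univ, true_and, mono_ne_zero_iff, Fintype.mem_piFinset]
  refine forall_congr' fun i => ?_
  split_ifs <;> simp_all

lemma mono_ne_zero (v : Fin m → ZMod 2) : mono v ≠ 0 := by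
  intro h
  have hwt := fwt_mono v
  simp only [h, fwt, Pi.zero_apply, ne_eq, not_true_eq_false, filter_false, card_empty] at hwt
  exact pow_ne_zero _ two_ne_zero hwt.symm

def subcube (u z : Fin m → ZMod 2) : Finset (Fin m → ZMod 2) :=
  Fintype.piFinset fun i => if u i = 1 then univ else {z i}

lemma sum_subcube_mono (u z v : Fin m → ZMod 2) :
    ∑ x ∈ subcube u z, mono v x =
      ∏ i, if u i = 1 then (if v i = 1 then 1 else 0) else z i ^ (v i).val := by
  calc _ = ∏ i, ∑ b ∈ (if u i = 1 then univ else {z i}), b ^ (v i).val :=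
        (prod_univ_sum _ _).symm
    _ = _ := prod_congr rfl fun i _ => by
      by_cases hu : u i = 1
      · rw [if_pos hu, if_pos hu]
        exact sum_pow_val_zmod_two (v i)
      · rw [if_neg hu, if_neg hu, sum_singleton]

lemma sum_subcube_mono_eq_zero {u v : Fin m → ZMod 2} (z : Fin m → ZMod 2)
    (h : ∃ i, u i = 1 ∧ v i ≠ 1) : ∑ x ∈ subcube u z, mono v x = 0 := by
  obtain ⟨i, hu, hv⟩ := h
  rw [sum_subcube_mono]
  exact prod_eq_zero (mem_univ i) (by simp [hu, hv])

lemma sum_subcube_mono_self (u z : Fin m → ZMod 2) : ∑ x ∈ subcube u z, mono u x = 1 := by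
  rw [sum_subcube_mono]
  refine prod_eq_one fun i _ => ?_
  generalize u i = a; generalize z i = b; revert a b; decide

/-- The subcube sum of `x^v` vanishes unless `x^u ∣ x^v`, and by maximality of `wt u` the only
such `v` in the support of `l` is `u` itself. -/
lemma sum_subcube_linearCombination_mono (l : (Fin m → ZMod 2) →₀ ZMod 2)
    {u : Fin m → ZMod 2} (hu : ∀ v ∈ l.support, wt v ≤ wt u) (z : Fin m → ZMod 2) :
    ∑ x ∈ subcube u z, Finsupp.linearCombination (ZMod 2) mono l x = l u := by
  simp only [Finsupp.linearCombination_apply, Finsupp.sum, Finset.sum_apply, Pi.smul_apply,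
    smul_eq_mul]
  rw [sum_comm]
  simp_rw [← mul_sum]
  rw [sum_eq_single u]
  · rw [sum_subcube_mono_self, mul_one]
  · intro v hv hvu
    have hdiv : ∃ i, u i = 1 ∧ v i ≠ 1 := by
      by_contra! h
      exact hvu (eq_of_support_subset_of_wt_le h (hu v hv))
    rw [sum_subcube_mono_eq_zero z hdiv, mul_zero]
  · intro hu
    rw [Finsupp.notMem_support_iff.mp hu, zero_mul]

/-- The subcubes along `u` are the fibres of the projection killing the coordinates in the
support of `u`, and there are `2 ^ (m - wt u)` of them. -/
lemma pow_le_fwt_of_forall_subcube {c : (Fin m → ZMod 2) → ZMod 2} (u : Fin m → ZMod 2)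
    (h : ∀ z, ∃ x ∈ subcube u z, c x ≠ 0) : 2 ^ (m - wt u) ≤ fwt c := by
  rw [← card_piFinset_ite_singleton u 0, fwt]
  refine card_le_card_of_surjOn (fun x i => if u i = 1 then 0 else x i) fun z hz => ?_
  obtain ⟨x, hx, hcx⟩ := h z
  refine ⟨x, by simpa using hcx, funext fun i => ?_⟩
  have hxi := Fintype.mem_piFinset.mp hx i
  have hzi := Fintype.mem_piFinset.mp hz i
  split_ifs at hxi hzi ⊢ <;> simp_all

lemma pow_sub_sup_wt_le_fwt {S : Finset (Fin m → ZMod 2)} (l : (Fin m → ZMod 2) →₀ ZMod 2)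
    (hlS : ↑l.support ⊆ (S : Set (Fin m → ZMod 2)))
    (hl : Finsupp.linearCombination (ZMod 2) mono l ≠ 0) :
    2 ^ (m - S.sup wt) ≤ fwt (Finsupp.linearCombination (ZMod 2) mono l) := by
  have hsupp : l.support.Nonempty :=
    Finsupp.support_nonempty_iff.mpr fun h => hl (by rw [h, map_zero])
  obtain ⟨u, hu, humax⟩ := exists_max_image l.support wt hsupp
  have hmeets : ∀ z, ∃ x ∈ subcube u z, Finsupp.linearCombination (ZMod 2) mono l x ≠ 0 :=
    fun z => exists_ne_zero_of_sum_ne_zero <| by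
      rw [sum_subcube_linearCombination_mono l humax z]
      exact Finsupp.mem_support_iff.mp hu
  calc 2 ^ (m - S.sup wt) ≤ 2 ^ (m - wt u) :=
        Nat.pow_le_pow_right two_pos (Nat.sub_le_sub_left (le_sup (hlS hu)) m)
    _ ≤ _ := pow_le_fwt_of_forall_subcube u hmeets

end MonomialCode

/-- The minimum distance of a monomial code with generating set `S` is
`2^(m - r)`, where `r` is the maximal degree of a monomial in `S`:
`2^(m-r)` is the least Hamming weight of a nonzero codeword. -/
theorem monomial_code_min_distance {m : ℕ} (S : Finset (Fin m → ZMod 2))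
    (hS : S.Nonempty) :
    IsLeast {w | ∃ c ∈ Submodule.span (ZMod 2) {f | ∃ v ∈ S, f = mono v},
        c ≠ 0 ∧ w = fwt c}
      (2 ^ (m - S.sup wt)) := by
  have hgen : {f | ∃ v ∈ S, f = mono v} = mono '' (S : Set (Fin m → ZMod 2)) := by
    ext f
    simp [eq_comm]
  refine ⟨?_, ?_⟩
  · obtain ⟨v, hvS, hv⟩ := exists_mem_eq_sup S hS wt
    exact ⟨mono v, Submodule.subset_span ⟨v, hvS, rfl⟩, mono_ne_zero v, by rw [fwt_mono, hv]⟩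
  · rintro w ⟨c, hc, hc0, rfl⟩
    rw [hgen] at hc
    obtain ⟨l, hlS, rfl⟩ := (Finsupp.mem_span_image_iff_linearCombination (ZMod 2)).mp hc
    exact pow_sub_sup_wt_le_fwt l hlS hc0
end

section
/- Let C be a t-symmetric monomial code of length 2^m and dimension k obtained from the full space by removing monomials, where removing a monomial x^v with τ_v = l decreases the dimension of each of the t target derivative codes by l/t on average, and the t target derivative dimensions must all be equal integers. If k = Σ_{i=0}^{l−1} binom(t,i) 2^{m−t} + j·lcm(l,t)/l with 0 ≤ j·lcm(l,t)/l < binom(t,l)2^{m−t}, then the common target derivative dimension k̃_t satisfies k̃_t ≥ Σ_{i=0}^{l−2} binom(t−1,i) 2^{m−t} + j·lcm(l,t)/t. -/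
/-- Lower bound on the common target-derivative dimension of a `t`-symmetric
monomial code. The code is spanned by the monomials indexed by `S`; the
derivative code in direction `e_i` has dimension `|{v ∈ S : v i = 1}|`.
`t`-symmetry: the first `t` derivative dimensions all equal `ktil` and the
remaining `m - t` are strictly larger. If the dimension of the code is
`k = Σ_{i=0}^{l-1} binom(t,i)·2^{m-t} + j·lcm(l,t)/l`, with
`0 ≤ j·lcm(l,t)/l < binom(t,l)·2^{m-t}`, then
`ktil ≥ Σ_{i=0}^{l-2} binom(t-1,i)·2^{m-t} + j·lcm(l,t)/t`. -/
theorem t_symmetric_derivative_lower_bound {m t l j ktil : ℕ}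
    (S : Finset (Fin m → ZMod 2))
    (hl : 1 ≤ l) (hlt : l ≤ t) (htm : t ≤ m)
    (hsym : ∀ i : Fin m, (i : ℕ) < t →
      (S.filter fun v => v i = 1).card = ktil)
    (hasym : ∀ i : Fin m, t ≤ (i : ℕ) →
      ktil < (S.filter fun v => v i = 1).card)
    (hk : S.card =
      (∑ i ∈ Finset.range l, t.choose i * 2 ^ (m - t)) + j * Nat.lcm l t / l)
    (hrange : j * Nat.lcm l t / l < t.choose l * 2 ^ (m - t)) :
    (∑ i ∈ Finset.range (l - 1), (t - 1).choose i * 2 ^ (m - t)) +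
        j * Nat.lcm l t / t ≤ ktil := by
  classical
  set r : ℕ := j * Nat.lcm l t / l with hr
  set T : Finset (Fin m) := Finset.univ.filter (fun i => (i : ℕ) < t) with hT
  have hTcard : T.card = t := by
    have h : T = Finset.map (Fin.castLEEmb htm) Finset.univ := by
      ext i
      simp only [hT, Finset.mem_filter, Finset.mem_univ, true_and, Finset.mem_map,
        Fin.castLEEmb_apply]
      constructor
      · intro h; exact ⟨⟨i, h⟩, rfl⟩
      · rintro ⟨a, rfl⟩; exact a.isLt
    rw [h]; simp
  have hTc : Tᶜ.card = m - t := by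
    rw [Finset.card_compl, hTcard, Fintype.card_fin]
  -- weight function
  set w : (Fin m → ZMod 2) → ℕ :=
    fun v => ((Finset.univ.filter fun j : Fin m => v j = 1) ∩ T).card with hw
  have hwle : ∀ v, w v ≤ t := by
    intro v
    calc w v ≤ T.card := Finset.card_le_card Finset.inter_subset_right
    _ = t := hTcard
  -- Step A : t * ktil = ∑ v in S, w v
  have hA : t * ktil = ∑ v ∈ S, w v := by
    have h1 : ∀ v : Fin m → ZMod 2,
        (Finset.univ.filter fun j : Fin m => v j = 1) ∩ T
          = T.filter fun i => v i = 1 := by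
      intro v
      ext i
      simp only [hT, Finset.mem_inter, Finset.mem_filter, Finset.mem_univ, true_and]
      tauto
    calc t * ktil = ∑ i ∈ T, ktil := by rw [Finset.sum_const, smul_eq_mul, hTcard]
      _ = ∑ i ∈ T, (S.filter fun v => v i = 1).card := by
          apply Finset.sum_congr rfl
          intro i hi
          rw [hsym i (by simpa [hT] using hi)]
      _ = ∑ i ∈ T, ∑ v ∈ S, (if v i = 1 then 1 else 0) := by
          apply Finset.sum_congr rfl
          intro i _
          rw [Finset.card_filter]
      _ = ∑ v ∈ S, ∑ i ∈ T, (if v i = 1 then 1 else 0) := Finset.sum_comm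
      _ = ∑ v ∈ S, w v := by
          apply Finset.sum_congr rfl
          intro v _
          rw [← Finset.card_filter]
          exact (congrArg Finset.card (h1 v)).symm
  -- upper bound on the number of small-weight elements
  have hN : ∀ i : ℕ, (S.filter fun v => w v ≤ i).card
      ≤ (∑ i' ∈ Finset.range (i + 1), t.choose i') * 2 ^ (m - t) := by
    intro i
    set D := (T.powerset.filter fun A => A.card ≤ i) ×ˢ Tᶜ.powerset with hD
    have hmap : (S.filter fun v => w v ≤ i).card ≤ D.card := by
      apply Finset.card_le_card_of_injOn
        (fun v => ((Finset.univ.filter fun j : Fin m => v j = 1) ∩ T,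
                   (Finset.univ.filter fun j : Fin m => v j = 1) \ T))
      · intro v hv
        simp only [Finset.mem_coe, Finset.mem_filter] at hv
        simp only [hD, Finset.mem_coe, Finset.mem_product, Finset.mem_filter, Finset.mem_powerset]
        refine ⟨⟨Finset.inter_subset_right, hv.2⟩, ?_⟩
        intro x hx
        simp only [Finset.mem_sdiff] at hx
        simpa [Finset.mem_compl] using hx.2
      · intro v1 h1 v2 h2 heq
        simp only [Prod.mk.injEq] at heq
        have hsupp : (Finset.univ.filter fun j : Fin m => v1 j = 1)
            = (Finset.univ.filter fun j : Fin m => v2 j = 1) := by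
          have e1 := heq.1
          have e2 := heq.2
          have : ∀ A B : Finset (Fin m), A ∩ T = B ∩ T → A \ T = B \ T → A = B := by
            intro A B hAB hAB'
            ext x
            by_cases hx : x ∈ T
            · constructor
              · intro h; have : x ∈ B ∩ T := hAB ▸ Finset.mem_inter.2 ⟨h, hx⟩
                exact (Finset.mem_inter.1 this).1
              · intro h; have : x ∈ A ∩ T := hAB.symm ▸ Finset.mem_inter.2 ⟨h, hx⟩
                exact (Finset.mem_inter.1 this).1
            · constructor
              · intro h; have : x ∈ B \ T := hAB' ▸ Finset.mem_sdiff.2 ⟨h, hx⟩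
                exact (Finset.mem_sdiff.1 this).1
              · intro h; have : x ∈ A \ T := hAB'.symm ▸ Finset.mem_sdiff.2 ⟨h, hx⟩
                exact (Finset.mem_sdiff.1 this).1
          exact this _ _ e1 e2
        funext x
        have hx1 : v1 x = 1 ↔ v2 x = 1 := by
          constructor
          · intro h
            have : x ∈ (Finset.univ.filter fun j : Fin m => v2 j = 1) := by
              rw [← hsupp]; simp [h]
            simpa using this
          · intro h
            have : x ∈ (Finset.univ.filter fun j : Fin m => v1 j = 1) := by
              rw [hsupp]; simp [h]
            simpa using this
        have h01 : ∀ a : ZMod 2, a = 0 ∨ a = 1 := by decide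
        rcases h01 (v1 x) with h | h <;> rcases h01 (v2 x) with h' | h' <;>
          simp_all
    have hDcard : D.card = (∑ i' ∈ Finset.range (i + 1), t.choose i') * 2 ^ (m - t) := by
      rw [hD, Finset.card_product, Finset.card_powerset, hTc]
      congr 1
      have hsplit : (T.powerset.filter fun A => A.card ≤ i)
          = (Finset.range (i + 1)).biUnion (fun i' => T.powersetCard i') := by
        ext A
        simp only [Finset.mem_filter, Finset.mem_powerset, Finset.mem_biUnion,
          Finset.mem_range, Finset.mem_powersetCard, Nat.lt_succ_iff]
        constructor
        · rintro ⟨h1, h2⟩; exact ⟨A.card, h2, h1, rfl⟩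
        · rintro ⟨a, ha, h1, h2⟩; exact ⟨h1, h2 ▸ ha⟩
      rw [hsplit, Finset.card_biUnion]
      · apply Finset.sum_congr rfl
        intro i' _
        rw [Finset.card_powersetCard, hTcard]
      · intro a _ b _ hab
        simp only [Finset.disjoint_left, Finset.mem_powersetCard]
        rintro A ⟨-, hA1⟩ ⟨-, hA2⟩
        exact hab (hA1.symm.trans hA2)
    exact hmap.trans_eq hDcard
  -- Step B : lower bound on ∑ w
  have hB : ∀ i : ℕ, S.card - (∑ i' ∈ Finset.range (i + 1), t.choose i') * 2 ^ (m - t)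
      ≤ (S.filter fun v => i < w v).card := by
    intro i
    have hsplit : (S.filter fun v => i < w v).card + (S.filter fun v => w v ≤ i).card
        = S.card := by
      rw [← Finset.card_filter_add_card_filter_not (s := S) (p := fun v => i < w v)]
      congr 1
      congr 1
      apply Finset.filter_congr
      intro v _
      simp [Nat.not_lt]
    have := hN i
    omega
  have hsum : ∑ i ∈ Finset.range l,
      (S.card - (∑ i' ∈ Finset.range (i + 1), t.choose i') * 2 ^ (m - t))
      ≤ ∑ v ∈ S, w v := by
    have h1 : ∑ v ∈ S, w v = ∑ i ∈ Finset.range t, (S.filter fun v => i < w v).card := by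
      have h2 : ∀ v ∈ S, w v = ∑ i ∈ Finset.range t, (if i < w v then 1 else 0) := by
        intro v _
        rw [← Finset.card_filter]
        have : (Finset.range t).filter (fun i => i < w v) = Finset.range (w v) := by
          ext a
          simp only [Finset.mem_filter, Finset.mem_range]
          have := hwle v
          omega
        rw [this, Finset.card_range]
      rw [Finset.sum_congr rfl h2, Finset.sum_comm]
      apply Finset.sum_congr rfl
      intro i _
      rw [Finset.card_filter]
    rw [h1]
    calc ∑ i ∈ Finset.range l,
        (S.card - (∑ i' ∈ Finset.range (i + 1), t.choose i') * 2 ^ (m - t))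
        ≤ ∑ i ∈ Finset.range l, (S.filter fun v => i < w v).card :=
          Finset.sum_le_sum (fun i _ => hB i)
      _ ≤ ∑ i ∈ Finset.range t, (S.filter fun v => i < w v).card := by
          apply Finset.sum_le_sum_of_subset
          exact Finset.range_subset_range.2 hlt
  -- compute the left side of hsum
  have hterm : ∀ i ∈ Finset.range l,
      S.card - (∑ i' ∈ Finset.range (i + 1), t.choose i') * 2 ^ (m - t)
      = (∑ i' ∈ Finset.Ico (i + 1) l, t.choose i' * 2 ^ (m - t)) + r := by
    intro i hi
    rw [Finset.mem_range] at hi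
    have hdecomp : ∑ i' ∈ Finset.range l, t.choose i' * 2 ^ (m - t)
        = (∑ i' ∈ Finset.range (i + 1), t.choose i' * 2 ^ (m - t))
          + ∑ i' ∈ Finset.Ico (i + 1) l, t.choose i' * 2 ^ (m - t) := by
      rw [← Finset.sum_range_add_sum_Ico _ (by omega : i + 1 ≤ l)]
    have hmul : (∑ i' ∈ Finset.range (i + 1), t.choose i') * 2 ^ (m - t)
        = ∑ i' ∈ Finset.range (i + 1), t.choose i' * 2 ^ (m - t) :=
      Finset.sum_mul ..
    rw [hk, hdecomp, hmul, Nat.add_assoc, Nat.add_sub_cancel_left]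
  have hswap : ∑ i ∈ Finset.range l, ∑ i' ∈ Finset.Ico (i + 1) l, t.choose i' * 2 ^ (m - t)
      = ∑ i' ∈ Finset.range l, i' * (t.choose i' * 2 ^ (m - t)) := by
    rw [Finset.sum_comm' (s' := fun i' => Finset.range i') (t' := Finset.range l)
      (by intro x y; simp only [Finset.mem_range, Finset.mem_Ico]; omega)]
    apply Finset.sum_congr rfl
    intro i' _
    rw [Finset.sum_const, Finset.card_range, smul_eq_mul]
  have hmain : (∑ i' ∈ Finset.range l, i' * (t.choose i' * 2 ^ (m - t))) + l * r
      ≤ t * ktil := by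
    rw [hA]
    calc (∑ i' ∈ Finset.range l, i' * (t.choose i' * 2 ^ (m - t))) + l * r
        = ∑ i ∈ Finset.range l,
          ((∑ i' ∈ Finset.Ico (i + 1) l, t.choose i' * 2 ^ (m - t)) + r) := by
          rw [Finset.sum_add_distrib, Finset.sum_const, Finset.card_range, smul_eq_mul, hswap]
      _ = ∑ i ∈ Finset.range l,
          (S.card - (∑ i' ∈ Finset.range (i + 1), t.choose i') * 2 ^ (m - t)) :=
          (Finset.sum_congr rfl hterm).symm
      _ ≤ ∑ v ∈ S, w v := hsum
  -- final arithmetic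
  have htpos : 0 < t := lt_of_lt_of_le hl hlt
  have hdvd_l : l ∣ Nat.lcm l t := Nat.dvd_lcm_left l t
  have hdvd_t : t ∣ Nat.lcm l t := Nat.dvd_lcm_right l t
  have hlr : l * r = j * Nat.lcm l t := by
    rw [hr, Nat.mul_div_cancel' (Dvd.dvd.mul_left hdvd_l j)]
  have htr : t * (j * Nat.lcm l t / t) = j * Nat.lcm l t := by
    rw [Nat.mul_div_cancel' (Dvd.dvd.mul_left hdvd_t j)]
  apply Nat.le_of_mul_le_mul_left _ htpos
  rw [Nat.mul_add, htr, Finset.mul_sum]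
  have hshift : ∑ i ∈ Finset.range (l - 1), t * ((t - 1).choose i * 2 ^ (m - t))
      = ∑ i' ∈ Finset.range l, i' * (t.choose i' * 2 ^ (m - t)) := by
    obtain ⟨l', rfl⟩ : ∃ l', l = l' + 1 := ⟨l - 1, by omega⟩
    rw [Finset.sum_range_succ' (fun i' => i' * (t.choose i' * 2 ^ (m - t))) l']
    simp only [Nat.add_sub_cancel, Nat.zero_mul, Nat.add_zero]
    apply Finset.sum_congr rfl
    intro i _
    obtain ⟨t', rfl⟩ : ∃ t', t = t' + 1 := ⟨t - 1, by omega⟩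
    simp only [Nat.add_sub_cancel]
    rw [← Nat.mul_assoc, Nat.add_one_mul_choose_eq]
    ring
  rw [hshift, ← hlr]
  exact hmain
end
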